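/- An algebraic theory 𝒯 has enough points if for all t, t' ∈ 𝒯(n), t⟨c⟩ = t'⟨c⟩ for every tuple of constants c ∈ 𝒯(0)^n implies t = t'. Every λ-theory ℒ admits a map of λ-theories, injective in every component, into some λ-theory with enough points. -/

import Mathlib

open CategoryTheory Limits

/-- An algebraic theory (abstract clone / cartesian operad): sets of `n`-ary
operations with projections (variables) and substitution. Renaming along
`f : Fin n → Fin m` is derived as substitution along projections. -/
structure AlgTheory where
  carrier : ℕ → Type
  pr : ∀ {n : ℕ}, Fin n → carrier n
  subst : ∀ {n m : ℕ}, carrier n → (Fin n → carrier m) → carrier m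
  pr_subst : ∀ {n m : ℕ} (i : Fin n) (s : Fin n → carrier m), subst (pr i) s = s i
  subst_pr : ∀ {n : ℕ} (t : carrier n), subst t pr = t
  subst_assoc : ∀ {n m k : ℕ} (t : carrier n) (s : Fin n → carrier m) (r : Fin m → carrier k),
    subst (subst t s) r = subst t fun i => subst (s i) r

/-- Renaming (the functorial action on `Fin n`), derived from substitution. -/
def AlgTheory.rename (T : AlgTheory) {n m : ℕ} (f : Fin n → Fin m) (t : T.carrier n) :
    T.carrier m :=
  T.subst t fun i => T.pr (f i)
/-- Given a substitution tuple `s : T(m)^n`, the tuple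
`s⁺ : T(m+1)^(n+1)` consisting of the components of `s` weakened along
`Fin m ↪ Fin (m+1)` followed by the last projection. -/
def AlgTheory.lift (T : AlgTheory) {n m : ℕ} (s : Fin n → T.carrier m) :
    Fin (n + 1) → T.carrier (m + 1) :=
  Fin.lastCases (T.pr (Fin.last m)) fun i => T.rename Fin.castSucc (s i)

/-- A λ-theory: an algebraic theory with semi-closed structure, i.e. natural
retractions of `ℒ(n)` onto `ℒ(n+1)` (retraction `ρ`, section `λ` = `abs`),
compatible with substitution. -/
structure LambdaTheory extends AlgTheory where
  rho : ∀ {n : ℕ}, carrier n → carrier (n + 1)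
  abs : ∀ {n : ℕ}, carrier (n + 1) → carrier n
  rho_abs : ∀ {n : ℕ} (u : carrier (n + 1)), rho (abs u) = u
  rho_subst : ∀ {n m : ℕ} (t : carrier n) (s : Fin n → carrier m),
    subst (rho t) (AlgTheory.lift toAlgTheory s) = rho (subst t s)
  abs_subst : ∀ {n m : ℕ} (u : carrier (n + 1)) (s : Fin n → carrier m),
    subst (abs u) s = abs (subst u (AlgTheory.lift toAlgTheory s))

/-- The binary application operation `app = ρ(pr₁) ∈ ℒ(2)`. -/
def LambdaTheory.appOp (L : LambdaTheory) : L.carrier 2 := L.rho (L.pr 0)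

/-- The constant `𝕒 = λ(λ(app)) ∈ ℒ(0)`. -/
def LambdaTheory.appConst (L : LambdaTheory) : L.carrier 0 := L.abs (L.abs L.appOp)
/-- A map of algebraic theories: a family of maps preserving projections and
substitution (hence also renaming). -/
structure TheoryHom (S T : AlgTheory) where
  app : ∀ {n : ℕ}, S.carrier n → T.carrier n
  map_pr : ∀ {n : ℕ} (i : Fin n), app (S.pr i) = T.pr i
  map_subst : ∀ {n m : ℕ} (t : S.carrier n) (s : Fin n → S.carrier m),
    app (S.subst t s) = T.subst (app t) fun i => app (s i)
/-- A map of λ-theories: a map of the underlying algebraic theories commuting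
with the retractions `ρ` and the sections `λ`. -/
structure LambdaTheoryHom (L M : LambdaTheory) extends
    TheoryHom L.toAlgTheory M.toAlgTheory where
  map_rho : ∀ {n : ℕ} (t : L.carrier n), app (L.rho t) = M.rho (app t)
  map_abs : ∀ {n : ℕ} (u : L.carrier (n + 1)), app (L.abs u) = M.abs (app u)

/-- An algebraic theory has enough points when equality of operations is
reflected by their action on tuples of constants. -/
def AlgTheory.HasEnoughPoints (T : AlgTheory) : Prop :=
  ∀ (n : ℕ) (t t' : T.carrier n),
    (∀ c : Fin n → T.carrier 0, T.subst t c = T.subst t' c) → t = t'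

/-! Adjoin countably many indeterminates: `T[x₀, x₁, …]` is the directed colimit of the theories
`T(k + ·)` of operations in `k` extra variables, along the weakenings that add indeterminates.
Weakening is injective, so `T` embeds in the colimit. Two operations `t, t'` of the colimit
both live at some stage `K`; substituting the fresh indeterminates `x_K, …, x_{K+n-1}`, which
are constants of the colimit, for their variables gives back `t` and `t'` at stage `K + n`, so
if they agree on all constants they are equal. For a λ-theory, `ρ` and `λ` act stage-wise and
commute with weakening and substitution, so the colimit is again a λ-theory. -/

namespace AlgTheory

variable (T : AlgTheory) {a b c : ℕ}

theorem subst_rename (f : Fin a → Fin b) (t : T.carrier a) (s : Fin b → T.carrier c) :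
    T.subst (T.rename f t) s = T.subst t (s ∘ f) := by
  simp only [rename, T.subst_assoc, T.pr_subst]
  rfl

theorem rename_subst (f : Fin b → Fin c) (t : T.carrier a) (s : Fin a → T.carrier b) :
    T.rename f (T.subst t s) = T.subst t (T.rename f ∘ s) :=
  T.subst_assoc _ _ _

theorem rename_pr (f : Fin a → Fin b) (i : Fin a) : T.rename f (T.pr i) = T.pr (f i) :=
  T.pr_subst _ _

theorem rename_rename (f : Fin a → Fin b) (g : Fin b → Fin c) (t : T.carrier a) :
    T.rename g (T.rename f t) = T.rename (g ∘ f) t := by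
  rw [rename, subst_rename]
  rfl

theorem rename_id (t : T.carrier a) : T.rename id t = t :=
  T.subst_pr t

/-- Substituting along any extension of `T.pr` over `f` undoes renaming along `f`; outside the
range of `f` the term itself serves as default value, so no constant is needed. -/
theorem rename_injective {f : Fin a → Fin b} (hf : Function.Injective f) :
    Function.Injective (T.rename f) := by
  intro t t' h
  have key : ∀ x, T.subst (T.rename f x) (Function.extend f T.pr fun _ => t) = x := by
    intro x
    rw [subst_rename, Function.extend_comp hf, T.subst_pr]
  rw [← key t, ← key t', h]

theorem lift_apply_castSucc (s : Fin a → T.carrier b) (i : Fin a) :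
    T.lift s (Fin.castSucc i) = T.rename Fin.castSucc (s i) :=
  Fin.lastCases_castSucc i

theorem lift_apply_last (s : Fin a → T.carrier b) : T.lift s (Fin.last a) = T.pr (Fin.last b) :=
  Fin.lastCases_last

theorem lift_pr {f : Fin a → Fin b} {g : Fin (a + 1) → Fin (b + 1)}
    (hg : ∀ i, g (Fin.castSucc i) = Fin.castSucc (f i)) (hl : g (Fin.last a) = Fin.last b) :
    T.lift (fun i => T.pr (f i)) = fun q => T.pr (g q) := by
  ext q
  refine Fin.lastCases ?_ (fun i => ?_) q
  · rw [lift_apply_last, hl]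
  · rw [lift_apply_castSucc, rename_pr, hg]

end AlgTheory

namespace LambdaTheory

variable (L : LambdaTheory) {a b : ℕ} {f : Fin a → Fin b} {g : Fin (a + 1) → Fin (b + 1)}

theorem rho_rename (hg : ∀ i, g (Fin.castSucc i) = Fin.castSucc (f i))
    (hl : g (Fin.last a) = Fin.last b) (t : L.carrier a) :
    L.rho (L.rename f t) = L.rename g (L.rho t) := by
  rw [AlgTheory.rename, ← L.rho_subst, L.lift_pr hg hl]
  rfl

theorem rename_abs (hg : ∀ i, g (Fin.castSucc i) = Fin.castSucc (f i))
    (hl : g (Fin.last a) = Fin.last b) (u : L.carrier (a + 1)) :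
    L.rename f (L.abs u) = L.abs (L.rename g u) := by
  rw [AlgTheory.rename, L.abs_subst, L.lift_pr hg hl]
  rfl

end LambdaTheory

namespace AlgTheory

variable (T : AlgTheory)

section Stage

variable {n k K : ℕ}

/-- At stage `k`, an `n`-ary operation of `T[x₀, x₁, …]` is an element of `T(k + n)` whose
first `k` variables are the indeterminates `x₀, …, x_{k-1}`; `stageMap n h` adds the
indeterminates `x_k, …, x_{K-1}`. Putting the indeterminates first makes `k + (n + 1)` and
`(k + n) + 1` definitionally equal, so the `ρ` and `λ` of a λ-theory act on each stage
unchanged. -/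
def stageMap (n : ℕ) (h : k ≤ K) : Fin (k + n) → Fin (K + n) :=
  Fin.addCases (fun i => Fin.castAdd n (Fin.castLE h i)) (Fin.natAdd K)

theorem stageMap_val (h : k ≤ K) (j : Fin (k + n)) :
    (stageMap n h j : ℕ) = if (j : ℕ) < k then (j : ℕ) else j + (K - k) := by
  refine Fin.addCases (fun i => ?_) (fun i => ?_) j
  · simp [stageMap]
  · simp only [stageMap, Fin.addCases_right, Fin.val_natAdd]
    split_ifs <;> omega

theorem stageMap_injective (h : k ≤ K) : Function.Injective (stageMap n h) := by
  intro i j hij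
  have hval := congrArg Fin.val hij
  simp only [stageMap_val] at hval
  ext
  split_ifs at hval <;> omega

theorem stageMap_refl : stageMap n (le_refl k) = id := by
  ext j
  simp [stageMap_val]

theorem stageMap_comp {K' : ℕ} (h : k ≤ K) (h' : K ≤ K') :
    stageMap n h' ∘ stageMap n h = stageMap n (h.trans h') := by
  ext j
  rw [Function.comp_apply, stageMap_val, stageMap_val, stageMap_val]
  split_ifs <;> omega

theorem stageMap_castSucc (h : k ≤ K) (i : Fin (k + n)) :
    stageMap (n + 1) h (Fin.castSucc i) = Fin.castSucc (stageMap n h i) := by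
  ext
  simp only [stageMap_val, Fin.val_castSucc]

theorem stageMap_last (h : k ≤ K) :
    stageMap (n + 1) h (Fin.last (k + n)) = Fin.last (K + n) := by
  ext
  simp only [stageMap_val, Fin.val_last]
  split_ifs <;> omega

def stageEmb (n : ℕ) (h : k ≤ K) : T.carrier (k + n) ↪ T.carrier (K + n) :=
  ⟨T.rename (stageMap n h), T.rename_injective (stageMap_injective h)⟩

instance (n : ℕ) : DirectedSystem (fun k => T.carrier (k + n)) (fun _ _ h => T.stageEmb n h) where
  map_self x := by simp [stageEmb, stageMap_refl, rename_id]
  map_map h h' x := by simp [stageEmb, rename_rename, stageMap_comp]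

abbrev Poly (n : ℕ) : Type :=
  DirectLimit (fun k => T.carrier (k + n)) (fun _ _ h => T.stageEmb n h)

variable {m p : ℕ}

def stageSubst (t : T.carrier (k + n)) (u : Fin n → T.carrier (k + m)) : T.carrier (k + m) :=
  T.subst t (Fin.append (fun i => T.pr (Fin.castAdd m i)) u)

theorem stageSubst_rename_stageMap (h : k ≤ K) (t : T.carrier (k + n))
    (u : Fin n → T.carrier (k + m)) :
    T.stageSubst (T.rename (stageMap n h) t) (T.rename (stageMap m h) ∘ u) =
      T.rename (stageMap m h) (T.stageSubst t u) := by
  rw [stageSubst, stageSubst, subst_rename, rename_subst]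
  congr 1
  ext j
  refine Fin.addCases (fun i => ?_) (fun i => ?_) j <;> simp [stageMap, rename_pr]

theorem stageSubst_assoc (t : T.carrier (k + n)) (u : Fin n → T.carrier (k + m))
    (v : Fin m → T.carrier (k + p)) :
    T.stageSubst (T.stageSubst t u) v = T.stageSubst t fun i => T.stageSubst (u i) v := by
  rw [stageSubst, stageSubst, T.subst_assoc]
  congr 1
  ext j
  refine Fin.addCases (fun i => ?_) (fun i => ?_) j <;> simp [stageSubst, T.pr_subst]

theorem stageSubst_rename_natAdd (t : T.carrier n) (u : Fin n → T.carrier (k + m)) :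
    T.stageSubst (T.rename (Fin.natAdd k) t) u = T.subst t u := by
  rw [stageSubst, subst_rename]
  congr 1
  ext i
  simp

theorem stageSubst_pr (f : Fin n → Fin m) (t : T.carrier (k + n)) :
    T.stageSubst t (fun i => T.pr (Fin.natAdd k (f i))) =
      T.rename (Fin.addCases (Fin.castAdd m) (Fin.natAdd k ∘ f)) t := by
  rw [stageSubst, rename]
  congr 1
  ext j
  refine Fin.addCases (fun i => ?_) (fun i => ?_) j <;> simp

theorem stageSubst_lift (t : T.carrier (k + (n + 1))) (u : Fin n → T.carrier (k + m)) :
    T.stageSubst (n := n + 1) (m := m + 1) t (T.lift u) =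
      T.subst t (T.lift (Fin.append (fun i => T.pr (Fin.castAdd m i)) u)) := by
  rw [stageSubst]
  congr 1
  ext j
  refine Fin.addCases (fun i => ?_) (fun q => ?_) j
  · refine (Fin.append_left _ _ i).trans
      (Eq.trans ?_ (T.lift_apply_castSucc _ (Fin.castAdd n i)).symm)
    rw [Fin.append_left, rename_pr]
    rfl
  · rw [Fin.append_right]
    refine Fin.lastCases ?_ (fun i => ?_) q
    · exact (T.lift_apply_last u).trans (T.lift_apply_last _).symm
    · refine (T.lift_apply_castSucc u i).trans
        (Eq.trans ?_ (T.lift_apply_castSucc _ (Fin.natAdd k i)).symm)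
      rw [Fin.append_right]

theorem stageSubst_rename_stageMap_natAdd (t : T.carrier (K + n)) :
    T.stageSubst (m := 0) (T.rename (stageMap n (Nat.le_add_right K n)) t)
      (fun i => T.pr (Fin.natAdd K i)) = t := by
  rw [stageSubst, subst_rename]
  conv_rhs => rw [← T.subst_pr t]
  congr 1
  ext j
  refine Fin.addCases (fun i => ?_) (fun i => ?_) j
  · simp only [Function.comp_apply, stageMap, Fin.addCases_left, Fin.append_left]
    rfl
  · simp only [Function.comp_apply, stageMap, Fin.addCases_right, Fin.append_right]

end Stage

namespace Poly

open Filter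

variable {T} {n m p : ℕ}

def mk (k : ℕ) (t : T.carrier (k + n)) : T.Poly n := ⟦⟨k, t⟩⟧

theorem mk_rename_stageMap {k K : ℕ} (h : k ≤ K) (t : T.carrier (k + n)) :
    mk K (T.rename (stageMap n h) t) = mk k t :=
  (DirectLimit.eq_of_le (F := fun k => T.carrier (k + n)) (f := fun _ _ h => T.stageEmb n h)
    ⟨k, t⟩ K h).symm

theorem mk_injective (k : ℕ) : Function.Injective (mk (T := T) (n := n) k) :=
  DirectLimit.mk_injective _ (fun _ _ h => (T.stageEmb n h).injective) k

theorem mk_eq_mk_iff {a b c : ℕ} (ha : a ≤ c) (hb : b ≤ c) {x : T.carrier (a + n)}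
    {y : T.carrier (b + n)} :
    mk a x = mk b y ↔ T.rename (stageMap n ha) x = T.rename (stageMap n hb) y := by
  rw [← mk_rename_stageMap ha, ← mk_rename_stageMap hb]
  exact (mk_injective c).eq_iff

theorem eventually_eq_mk (x : T.Poly n) : ∀ᶠ K in atTop, ∃ t, x = mk K t := by
  obtain ⟨k, t, rfl⟩ := DirectLimit.exists_eq_mk _ x
  exact eventually_atTop.2 ⟨k, fun K hK => ⟨_, (mk_rename_stageMap hK t).symm⟩⟩

theorem eventually_eq_mk_pi (s : Fin n → T.Poly m) :
    ∀ᶠ K in atTop, ∃ u : Fin n → T.carrier (K + m), s = fun i => mk K (u i) := by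
  simp only [funext_iff]
  exact (eventually_all.2 fun i => eventually_eq_mk (s i)).mono fun K => Classical.skolem.1

theorem exists_common_stage (x : T.Poly p) (s : Fin n → T.Poly m) :
    ∃ K, (∃ t, x = mk K t) ∧ ∃ u : Fin n → T.carrier (K + m), s = fun i => mk K (u i) :=
  ((eventually_eq_mk x).and (eventually_eq_mk_pi s)).exists

theorem mk_stageSubst_congr {a b : ℕ} {t : T.carrier (a + n)} {t' : T.carrier (b + n)}
    {u : Fin n → T.carrier (a + m)} {u' : Fin n → T.carrier (b + m)} (ht : mk a t = mk b t')
    (hu : ∀ i, mk a (u i) = mk b (u' i)) :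
    mk a (T.stageSubst t u) = mk b (T.stageSubst t' u') := by
  have ha : a ≤ max a b := le_max_left a b
  have hb : b ≤ max a b := le_max_right a b
  rw [mk_eq_mk_iff ha hb] at ht
  have hu' : T.rename (stageMap m ha) ∘ u = T.rename (stageMap m hb) ∘ u' :=
    funext fun i => (mk_eq_mk_iff ha hb).1 (hu i)
  rw [mk_eq_mk_iff ha hb, ← stageSubst_rename_stageMap, ← stageSubst_rename_stageMap, ht, hu']

noncomputable def subst (x : T.Poly n) (s : Fin n → T.Poly m) : T.Poly m :=
  have h := exists_common_stage x s
  mk h.choose (T.stageSubst h.choose_spec.1.choose h.choose_spec.2.choose)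

theorem subst_mk {k : ℕ} (t : T.carrier (k + n)) (u : Fin n → T.carrier (k + m)) :
    subst (mk k t) (fun i => mk k (u i)) = mk k (T.stageSubst t u) := by
  have h := exists_common_stage (mk k t) fun i => mk k (u i)
  exact mk_stageSubst_congr h.choose_spec.1.choose_spec.symm
    fun i => (congrFun h.choose_spec.2.choose_spec i).symm

def pr (i : Fin n) : T.Poly n := mk 0 (T.pr (Fin.natAdd 0 i))

theorem mk_pr_natAdd (k : ℕ) (i : Fin n) : mk k (T.pr (Fin.natAdd k i)) = pr (T := T) i := by
  rw [pr, ← mk_rename_stageMap (Nat.zero_le k), rename_pr, stageMap, Fin.addCases_right]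

theorem subst_mk_pr (f : Fin n → Fin m) {k : ℕ} (t : T.carrier (k + n)) :
    subst (mk k t) (fun i => pr (f i)) =
      mk k (T.rename (Fin.addCases (Fin.castAdd m) (Fin.natAdd k ∘ f)) t) := by
  simp only [← mk_pr_natAdd k, subst_mk, stageSubst_pr]

theorem subst_mk_indets {K : ℕ} (t : T.carrier (K + n)) :
    subst (mk K t) (fun i => mk (K + n) (T.pr (Fin.natAdd K i))) = (mk (K + n) t : T.Poly 0) := by
  rw [← mk_rename_stageMap (Nat.le_add_right K n) t, subst_mk,
    stageSubst_rename_stageMap_natAdd]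

end Poly

noncomputable def poly : AlgTheory where
  carrier := T.Poly
  pr := Poly.pr
  subst := Poly.subst
  pr_subst i s := by
    obtain ⟨K, u, rfl⟩ := (Poly.eventually_eq_mk_pi s).exists
    rw [← Poly.mk_pr_natAdd K, Poly.subst_mk, stageSubst, T.pr_subst, Fin.append_right]
  subst_pr {n} x := by
    obtain ⟨K, t, rfl⟩ := (Poly.eventually_eq_mk x).exists
    have hid : Fin.addCases (Fin.castAdd n) (Fin.natAdd K ∘ id) = @id (Fin (K + n)) := by
      ext j
      refine Fin.addCases (fun i => ?_) (fun i => ?_) j <;> simp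
    exact (Poly.subst_mk_pr id t).trans (by rw [hid, rename_id])
  subst_assoc x s r := by
    obtain ⟨K, ⟨t, rfl⟩, ⟨u, rfl⟩, ⟨v, rfl⟩⟩ := ((Poly.eventually_eq_mk x).and
      ((Poly.eventually_eq_mk_pi s).and (Poly.eventually_eq_mk_pi r))).exists
    simp only [Poly.subst_mk, stageSubst_assoc]

noncomputable def polyHom : TheoryHom T T.poly where
  app t := Poly.mk 0 (T.rename (Fin.natAdd 0) t)
  map_pr i := by
    rw [rename_pr]
    rfl
  map_subst t s := by
    change _ = Poly.subst _ fun i => _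
    rw [Poly.subst_mk, stageSubst_rename_natAdd, rename_subst]
    rfl

theorem polyHom_injective (n : ℕ) : Function.Injective fun t : T.carrier n => T.polyHom.app t :=
  (Poly.mk_injective 0).comp (T.rename_injective (Fin.natAdd_injective n 0))

theorem hasEnoughPoints_poly : T.poly.HasEnoughPoints := by
  intro n x y h
  obtain ⟨K, ⟨t, rfl⟩, ⟨t', rfl⟩⟩ :=
    ((Poly.eventually_eq_mk x).and (Poly.eventually_eq_mk y)).exists
  have hc : (Poly.mk (K + n) t : T.Poly 0) = Poly.mk (K + n) t' := by
    rw [← Poly.subst_mk_indets, ← Poly.subst_mk_indets]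
    exact h _
  rw [Poly.mk_injective _ hc]

theorem Poly.lift_mk {n m k : ℕ} (u : Fin n → T.carrier (k + m)) :
    T.poly.lift (fun i => Poly.mk k (u i)) = fun q => Poly.mk (n := m + 1) k (T.lift u q) := by
  ext q
  refine Fin.lastCases ?_ (fun i => ?_) q
  · exact (T.poly.lift_apply_last _).trans
      ((Poly.mk_pr_natAdd k (Fin.last m)).symm.trans (congrArg _ (T.lift_apply_last u).symm))
  · refine (T.poly.lift_apply_castSucc _ i).trans ?_
    rw [lift_apply_castSucc]
    refine (Poly.subst_mk_pr Fin.castSucc (u i)).trans (congrArg _ (congrFun ?_ _))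
    congr 1
    ext j
    refine Fin.addCases (fun i => ?_) (fun i => ?_) j <;> simp

end AlgTheory

namespace LambdaTheory

open AlgTheory

variable (L : LambdaTheory) {n : ℕ}

noncomputable def polyRho : L.Poly n → L.Poly (n + 1) :=
  DirectLimit.map _ _ (fun _ t => L.rho t) fun _ _ h t =>
    (L.rho_rename (stageMap_castSucc (n := n) h) (stageMap_last h) t).symm

noncomputable def polyAbs : L.Poly (n + 1) → L.Poly n :=
  DirectLimit.map _ _ (fun _ u => L.abs u) fun _ _ h u =>
    L.rename_abs (stageMap_castSucc (n := n) h) (stageMap_last h) u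

theorem polyRho_mk {k : ℕ} (t : L.carrier (k + n)) :
    L.polyRho (Poly.mk k t) = Poly.mk (n := n + 1) k (L.rho t) :=
  rfl

theorem polyAbs_mk {k : ℕ} (u : L.carrier (k + (n + 1))) :
    L.polyAbs (Poly.mk k u) = Poly.mk k (L.abs u) :=
  rfl

noncomputable def poly : LambdaTheory where
  toAlgTheory := L.toAlgTheory.poly
  rho := L.polyRho
  abs := L.polyAbs
  rho_abs x := by
    obtain ⟨k, u, rfl⟩ := (Poly.eventually_eq_mk x).exists
    exact congrArg (Poly.mk k) (L.rho_abs u)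
  rho_subst {n m} x s := by
    obtain ⟨K, ⟨t, rfl⟩, ⟨u, rfl⟩⟩ := Poly.exists_common_stage x s
    change Poly.subst (Poly.mk (n := n + 1) K (L.rho t))
        (L.toAlgTheory.poly.lift fun i => Poly.mk K (u i)) =
      L.polyRho (Poly.subst (Poly.mk K t) fun i => Poly.mk K (u i))
    rw [Poly.lift_mk, Poly.subst_mk, Poly.subst_mk, polyRho_mk, stageSubst_lift, L.rho_subst]
    rfl
  abs_subst x s := by
    obtain ⟨K, ⟨t, rfl⟩, ⟨u, rfl⟩⟩ := Poly.exists_common_stage x s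
    change Poly.subst (Poly.mk K (L.abs t)) (fun i => Poly.mk K (u i)) =
      L.polyAbs (Poly.subst (Poly.mk K t) (L.toAlgTheory.poly.lift fun i => Poly.mk K (u i)))
    rw [Poly.lift_mk, Poly.subst_mk, Poly.subst_mk, polyAbs_mk, stageSubst_lift, stageSubst,
      L.abs_subst]

noncomputable def polyHom : LambdaTheoryHom L L.poly where
  toTheoryHom := L.toAlgTheory.polyHom
  map_rho {n} t := congrArg (Poly.mk 0)
    (L.rho_rename (a := n) (fun _ => Fin.natAdd_castSucc) Fin.natAdd_last t).symm
  map_abs {n} u := congrArg (Poly.mk 0)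
    (L.rename_abs (a := n) (fun _ => Fin.natAdd_castSucc) Fin.natAdd_last u)

end LambdaTheory

/-- STATEMENT 11: every λ-theory admits a componentwise injective map of
λ-theories into a λ-theory with enough points. -/
theorem embeds_in_enough_points (L : LambdaTheory) :
    ∃ (M : LambdaTheory) (F : LambdaTheoryHom L M),
      M.toAlgTheory.HasEnoughPoints ∧
        ∀ n : ℕ, Function.Injective fun t : L.carrier n => F.app t :=
  ⟨L.poly, L.polyHom, L.toAlgTheory.hasEnoughPoints_poly, L.toAlgTheory.polyHom_injective⟩
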